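/- arXiv:2402.11280 — 3 statements merged into one kernel-verified Lean document; each statement's English description precedes it below -/
import Mathlib

section
/- Under Assumption A, there exist τ₀ > 0 and Q > 0, depending only on d, k, L and T, such that for every N ∈ ℕ with τ = T/N ≤ τ₀, the iterates of the constrained discrete HiSD scheme satisfy ‖v_{i,n} − v_{i,n−1}‖ ≤ Q τ for all 1 ≤ i ≤ k and 1 ≤ n ≤ N. -/
open scoped RealInnerProductSpace BigOperators

/-!
Each step perturbs the current point of the manifold by O(τ) and projects back. Normalizing `y`
moves it no farther from a unit vector `x` than `‖y - x‖`, and `I - 2 ∑ vⱼ vⱼᵀ` is an isometry, so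
`‖xₙ - xₙ₋₁‖ ≤ 2τ‖F(xₙ₋₁)‖`. Vector transport then moves `vᵢ,ₙ₋₁` by at most
`2τ‖J(xₙ₋₁)‖ + ‖xₙ - xₙ₋₁‖`, and Gram–Schmidt turns a perturbation `δ` of an orthonormal family
into one of at most `(3^(i+1) - 1) δ` in its `i`-th vector. On the unit sphere Assumption A bounds
`‖F‖ ≤ 2L` and `‖J‖ ≤ ‖J(x₀)‖ + 2L`, which gives `Q`.
-/

noncomputable section

open Finset

theorem norm_inv_norm_smul_sub_le {E : Type*} [NormedAddCommGroup E] [NormedSpace ℝ E]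
    {x : E} (hx : ‖x‖ = 1) (y : E) : ‖‖y‖⁻¹ • y - x‖ ≤ 2 * ‖y - x‖ := by
  have hy : ‖‖y‖⁻¹ • y - y‖ ≤ ‖y - x‖ := by
    rcases eq_or_ne y 0 with rfl | hy0
    · simp
    have hn : ‖y‖ ≠ 0 := norm_ne_zero_iff.mpr hy0
    calc ‖‖y‖⁻¹ • y - y‖ = |‖x‖ - ‖y‖| := by
          rw [show ‖y‖⁻¹ • y - y = (‖y‖⁻¹ - 1) • y by rw [sub_smul, one_smul], norm_smul,
            Real.norm_eq_abs, hx, ← abs_norm y, ← abs_mul, abs_norm]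
          congr 1
          field_simp
      _ ≤ ‖x - y‖ := abs_norm_sub_norm_le x y
      _ = ‖y - x‖ := norm_sub_rev x y
  linarith [norm_sub_le_norm_sub_add_norm_sub (‖y‖⁻¹ • y) y x]

theorem two_mul_sum_Iio_three_pow_add_three {k : ℕ} (i : Fin k) :
    2 * ∑ j ∈ Iio i, (3 : ℝ) ^ ((j : ℕ) + 1) + 3 = 3 ^ ((i : ℕ) + 1) := by
  have hrange : ∑ j ∈ Iio i, (3 : ℝ) ^ ((j : ℕ) + 1) = ∑ m ∈ range i, (3 : ℝ) ^ (m + 1) := by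
    rw [← Nat.Iio_eq_range, ← Fin.map_valEmbedding_Iio, sum_map]
    rfl
  rw [hrange]
  induction (i : ℕ) with
  | zero => norm_num
  | succ n ih => rw [sum_range_succ, pow_succ 3 (n + 1), ← ih]; ring

section InnerProductSpace

variable {E : Type*} [NormedAddCommGroup E] [InnerProductSpace ℝ E]

def reflectFrame {ι : Type*} [Fintype ι] (v : ι → E) (y : E) : E :=
  y - (2 : ℝ) • ∑ j, ⟪v j, y⟫ • v j

theorem Orthonormal.norm_reflectFrame {ι : Type*} [Fintype ι] {v : ι → E}
    (hv : Orthonormal ℝ v) (y : E) : ‖reflectFrame v y‖ = ‖y‖ := by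
  rw [← sq_eq_sq₀ (norm_nonneg _) (norm_nonneg _), ← real_inner_self_eq_norm_sq,
    ← real_inner_self_eq_norm_sq, reflectFrame]
  set p := ∑ j, ⟪v j, y⟫ • v j
  have hp : ⟪y, p⟫ = ⟪p, p⟫ := by
    simp only [p, hv.inner_sum, inner_sum, real_inner_smul_right, real_inner_comm y,
      starRingEnd_apply, star_trivial]
  simp only [inner_sub_left, inner_sub_right, real_inner_smul_left, real_inner_smul_right,
    real_inner_comm y p, hp]
  ring

def projTangent (x y : E) : E := y - ⟪y, x⟫ • x

theorem inner_projTangent_self {x : E} (hx : ‖x‖ = 1) (y : E) : ⟪projTangent x y, x⟫ = 0 := by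
  rw [projTangent, inner_sub_left, real_inner_smul_left, real_inner_self_eq_norm_sq, hx]
  ring

theorem norm_projTangent_sub_le {x x' e : E} (hx' : ‖x'‖ = 1) (he : ‖e‖ = 1) (hex : ⟪e, x⟫ = 0)
    (y : E) : ‖projTangent x' y - e‖ ≤ 2 * ‖y - e‖ + ‖x' - x‖ := by
  have hcoef : |⟪y, x'⟫| ≤ ‖y - e‖ + ‖x' - x‖ := by
    have hsplit : ⟪y, x'⟫ = ⟪y - e, x'⟫ + ⟪e, x' - x⟫ := by
      rw [inner_sub_left, inner_sub_right, hex]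
      ring
    calc |⟪y, x'⟫| ≤ |⟪y - e, x'⟫| + |⟪e, x' - x⟫| := hsplit ▸ abs_add_le _ _
      _ ≤ ‖y - e‖ * ‖x'‖ + ‖e‖ * ‖x' - x‖ :=
          add_le_add (abs_real_inner_le_norm _ _) (abs_real_inner_le_norm _ _)
      _ = ‖y - e‖ + ‖x' - x‖ := by rw [hx', he, mul_one, one_mul]
  calc ‖projTangent x' y - e‖ = ‖(y - e) - ⟪y, x'⟫ • x'‖ := by rw [projTangent, sub_right_comm]
    _ ≤ ‖y - e‖ + |⟪y, x'⟫| := by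
        refine (norm_sub_le _ _).trans_eq ?_
        rw [norm_smul, Real.norm_eq_abs, hx', mul_one]
    _ ≤ 2 * ‖y - e‖ + ‖x' - x‖ := by linarith

section GramSchmidt

variable {k : ℕ}

def gramSchmidtResidual (u g : Fin k → E) (i : Fin k) : E :=
  u i - ∑ j ∈ Iio i, ⟪u i, g j⟫ • g j

def IsGramSchmidtNormed (u g : Fin k → E) : Prop :=
  ∀ i, gramSchmidtResidual u g i ≠ 0 ∧
    g i = ‖gramSchmidtResidual u g i‖⁻¹ • gramSchmidtResidual u g i

namespace IsGramSchmidtNormed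

variable {u g : Fin k → E}

theorem norm_eq_one (h : IsGramSchmidtNormed u g) (i : Fin k) : ‖g i‖ = 1 := by
  rw [(h i).2]
  exact norm_smul_inv_norm (𝕜 := ℝ) (h i).1

theorem orthonormal (h : IsGramSchmidtNormed u g) : Orthonormal ℝ g := by
  have hlt : ∀ i, ∀ j < i, ⟪g i, g j⟫ = 0 := by
    intro i
    induction i using WellFoundedLT.induction with
    | _ i ih =>
      intro j hji
      have hpair : ∀ l ∈ Iio i, l ≠ j → ⟪g l, g j⟫ = 0 := by
        intro l hl hlj
        rcases lt_or_gt_of_ne hlj with hlj | hjl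
        · rw [real_inner_comm]
          exact ih j hji l hlj
        · exact ih l (mem_Iio.mp hl) j hjl
      have hres : ⟪gramSchmidtResidual u g i, g j⟫ = 0 := by
        have hothers : ∀ l ∈ Iio i, l ≠ j → ⟪⟪u i, g l⟫ • g l, g j⟫ = 0 := fun l hl hlj => by
          rw [real_inner_smul_left, hpair l hl hlj, mul_zero]
        rw [gramSchmidtResidual, inner_sub_left, sum_inner,
          sum_eq_single_of_mem j (mem_Iio.mpr hji) hothers, real_inner_smul_left,
          real_inner_self_eq_norm_sq, h.norm_eq_one]
        ring
      rw [(h i).2, real_inner_smul_left, hres, mul_zero]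
  refine ⟨h.norm_eq_one, fun i j hij => ?_⟩
  rcases lt_or_gt_of_ne hij with hij | hji
  · rw [real_inner_comm]
    exact hlt j i hij
  · exact hlt i j hji

theorem inner_eq_zero (h : IsGramSchmidtNormed u g) {x : E} (hu : ∀ i, ⟪u i, x⟫ = 0)
    (i : Fin k) : ⟪g i, x⟫ = 0 := by
  induction i using WellFoundedLT.induction with
  | _ i ih =>
    have hres : ⟪gramSchmidtResidual u g i, x⟫ = 0 := by
      have hterms : ∀ j ∈ Iio i, ⟪⟪u i, g j⟫ • g j, x⟫ = 0 := fun j hj => by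
        rw [real_inner_smul_left, ih j (mem_Iio.mp hj), mul_zero]
      rw [gramSchmidtResidual, inner_sub_left, sum_inner, hu i, sum_eq_zero hterms, sub_zero]
    rw [(h i).2, real_inner_smul_left, hres, mul_zero]

theorem norm_sub_le (h : IsGramSchmidtNormed u g) {e : Fin k → E} (he : Orthonormal ℝ e)
    {δ : ℝ} (hue : ∀ i, ‖u i - e i‖ ≤ δ) (i : Fin k) :
    ‖g i - e i‖ ≤ (3 ^ ((i : ℕ) + 1) - 1) * δ := by
  induction i using WellFoundedLT.induction with
  | _ i ih =>
    have hcoef : ∀ j ∈ Iio i, ‖⟪u i, g j⟫ • g j‖ ≤ 3 ^ ((j : ℕ) + 1) * δ := by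
      intro j hj
      have hsplit : ⟪u i, g j⟫ = ⟪u i - e i, g j⟫ + ⟪e i, g j - e j⟫ := by
        rw [inner_sub_left, inner_sub_right, he.inner_eq_zero (mem_Iio.mp hj).ne']
        ring
      rw [norm_smul, h.norm_eq_one, mul_one, Real.norm_eq_abs]
      calc |⟪u i, g j⟫| ≤ |⟪u i - e i, g j⟫| + |⟪e i, g j - e j⟫| := hsplit ▸ abs_add_le _ _
        _ ≤ ‖u i - e i‖ * ‖g j‖ + ‖e i‖ * ‖g j - e j‖ :=
            add_le_add (abs_real_inner_le_norm _ _) (abs_real_inner_le_norm _ _)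
        _ ≤ δ + (3 ^ ((j : ℕ) + 1) - 1) * δ := by
            rw [h.norm_eq_one, he.norm_eq_one, mul_one, one_mul]
            exact add_le_add (hue i) (ih j (mem_Iio.mp hj))
        _ = 3 ^ ((j : ℕ) + 1) * δ := by ring
    have hres : ‖gramSchmidtResidual u g i - e i‖ ≤ (3 ^ ((i : ℕ) + 1) - 1) / 2 * δ :=
      calc ‖gramSchmidtResidual u g i - e i‖
          = ‖(u i - e i) - ∑ j ∈ Iio i, ⟪u i, g j⟫ • g j‖ := by
            rw [gramSchmidtResidual, sub_right_comm]
        _ ≤ ‖u i - e i‖ + ∑ j ∈ Iio i, ‖⟪u i, g j⟫ • g j‖ :=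
            (_root_.norm_sub_le _ _).trans (add_le_add_right (norm_sum_le _ _) _)
        _ ≤ δ + ∑ j ∈ Iio i, 3 ^ ((j : ℕ) + 1) * δ := add_le_add (hue i) (sum_le_sum hcoef)
        _ = (3 ^ ((i : ℕ) + 1) - 1) / 2 * δ := by
            rw [← sum_mul, ← two_mul_sum_Iio_three_pow_add_three i]
            ring
    calc ‖g i - e i‖ ≤ 2 * ‖gramSchmidtResidual u g i - e i‖ := by
          rw [(h i).2]
          exact norm_inv_norm_smul_sub_le (he.norm_eq_one i) _
      _ ≤ (3 ^ ((i : ℕ) + 1) - 1) * δ := by linarith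

end IsGramSchmidtNormed

structure IsTangentFrame {ι : Type*} (x : E) (v : ι → E) : Prop where
  norm_eq_one : ‖x‖ = 1
  orthonormal : Orthonormal ℝ v
  inner_eq_zero : ∀ i, ⟪v i, x⟫ = 0

theorem IsTangentFrame.step {x x' : E} {v v' : Fin k → E} (hxv : IsTangentFrame x v)
    {τ : ℝ} (hτ : 0 ≤ τ) (A : E →L[ℝ] E) (f : E) (hxt : x + τ • reflectFrame v f ≠ 0)
    (hx' : x' = ‖x + τ • reflectFrame v f‖⁻¹ • (x + τ • reflectFrame v f))
    (hv' : IsGramSchmidtNormed (fun i => projTangent x' (v i + τ • A (v i))) v') :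
    IsTangentFrame x' v' ∧
      ∀ i, ‖v' i - v i‖ ≤ (3 ^ ((i : ℕ) + 1) - 1) * (2 * (‖A‖ + ‖f‖) * τ) := by
  have hx'_norm : ‖x'‖ = 1 := hx' ▸ norm_smul_inv_norm (𝕜 := ℝ) hxt
  have hdx : ‖x' - x‖ ≤ 2 * ‖f‖ * τ :=
    calc ‖x' - x‖ ≤ 2 * ‖(x + τ • reflectFrame v f) - x‖ :=
          hx' ▸ norm_inv_norm_smul_sub_le hxv.norm_eq_one _
      _ = 2 * ‖f‖ * τ := by
          rw [add_sub_cancel_left, norm_smul, hxv.orthonormal.norm_reflectFrame,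
            Real.norm_eq_abs, abs_of_nonneg hτ]
          ring
  have hdv : ∀ i, ‖projTangent x' (v i + τ • A (v i)) - v i‖ ≤ 2 * (‖A‖ + ‖f‖) * τ := by
    intro i
    have hAv : ‖τ • A (v i)‖ ≤ ‖A‖ * τ := by
      rw [norm_smul, Real.norm_eq_abs, abs_of_nonneg hτ, mul_comm]
      refine mul_le_mul_of_nonneg_right ((A.le_opNorm _).trans_eq ?_) hτ
      rw [hxv.orthonormal.norm_eq_one, mul_one]
    calc ‖projTangent x' (v i + τ • A (v i)) - v i‖
        ≤ 2 * ‖(v i + τ • A (v i)) - v i‖ + ‖x' - x‖ :=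
          norm_projTangent_sub_le hx'_norm (hxv.orthonormal.norm_eq_one i) (hxv.inner_eq_zero i) _
      _ ≤ 2 * (‖A‖ + ‖f‖) * τ := by
          rw [add_sub_cancel_left]
          linarith
  exact ⟨⟨hx'_norm, hv'.orthonormal, hv'.inner_eq_zero fun i => inner_projTangent_self hx'_norm _⟩,
    hv'.norm_sub_le hxv.orthonormal hdv⟩

end GramSchmidt

end InnerProductSpace

theorem hisd_stmt14_general
    (d k : ℕ)
    (F : EuclideanSpace ℝ (Fin d) → EuclideanSpace ℝ (Fin d))
    (J : EuclideanSpace ℝ (Fin d) → (EuclideanSpace ℝ (Fin d) →L[ℝ] EuclideanSpace ℝ (Fin d)))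
    (L : ℝ) (hL : 0 < L)
    (hLip : ∀ x₁ x₂ : EuclideanSpace ℝ (Fin d), ‖J x₂ - J x₁‖ + ‖F x₂ - F x₁‖ ≤ L * ‖x₂ - x₁‖)
    (hgrow : ∀ x : EuclideanSpace ℝ (Fin d), ‖F x‖ ≤ L * (1 + ‖x‖))
    (T : ℝ) (hT : 0 < T)
    (x₀ : EuclideanSpace ℝ (Fin d)) (hx₀ : ‖x₀‖ = 1)
    (v₀ : Fin k → EuclideanSpace ℝ (Fin d))
    (hv₀ : ∀ i j : Fin k, ⟪v₀ i, v₀ j⟫ = if i = j then (1:ℝ) else 0)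
    (hv₀x : ∀ i : Fin k, ⟪v₀ i, x₀⟫ = 0) :
    ∃ τ₀ > (0:ℝ), ∃ Q > (0:ℝ), ∀ (N : ℕ) (τ : ℝ), 0 < N → τ = T / N → τ ≤ τ₀ →
      ∀ (x : ℕ → EuclideanSpace ℝ (Fin d)) (v : ℕ → Fin k → EuclideanSpace ℝ (Fin d)),
        x 0 = x₀ → v 0 = v₀ →
        (∀ n < N,
          let xt := x n + τ • (F (x n) - (2:ℝ) • ∑ j, ⟪v n j, F (x n)⟫ • v n j)
          xt ≠ 0 ∧ x (n+1) = ‖xt‖⁻¹ • xt) →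
        (∀ n < N, ∀ i : Fin k,
          let vt := v n i + τ • J (x n) (v n i)
          let vh := vt - ⟪vt, x (n+1)⟫ • x (n+1)
          let w := vh - ∑ j ∈ Finset.Iio i, ⟪vh, v (n+1) j⟫ • v (n+1) j
          w ≠ 0 ∧ v (n+1) i = ‖w‖⁻¹ • w) →
        ∀ n < N, ∀ i : Fin k, ‖v (n+1) i - v n i‖ ≤ Q * τ := by
  have hJ : ∀ y, ‖y‖ = 1 → ‖J y‖ ≤ ‖J x₀‖ + 2 * L := fun y hy =>
    calc ‖J y‖ ≤ ‖J x₀‖ + ‖J y - J x₀‖ := norm_le_insert' _ _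
      _ ≤ ‖J x₀‖ + L * ‖y - x₀‖ := by linarith [hLip x₀ y, norm_nonneg (F y - F x₀)]
      _ ≤ ‖J x₀‖ + 2 * L := by nlinarith [norm_sub_le y x₀]
  have hF : ∀ y, ‖y‖ = 1 → ‖F y‖ ≤ 2 * L := fun y hy =>
    (hgrow y).trans_eq (by rw [hy]; ring)
  refine ⟨T, hT, 3 ^ k * (2 * (‖J x₀‖ + 4 * L)), by positivity, ?_⟩
  intro N τ hN hτ _ x v hx0 hv0 hxstep hvstep
  have hτ_nonneg : 0 ≤ τ := hτ ▸ by positivity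
  have step : ∀ n < N, IsTangentFrame (x n) (v n) → IsTangentFrame (x (n + 1)) (v (n + 1)) ∧
      ∀ i, ‖v (n + 1) i - v n i‖ ≤
        (3 ^ ((i : ℕ) + 1) - 1) * (2 * (‖J (x n)‖ + ‖F (x n)‖) * τ) := fun n hn hxv =>
    hxv.step hτ_nonneg (J (x n)) (F (x n)) (hxstep n hn).1 (hxstep n hn).2 (hvstep n hn)
  have frame : ∀ n ≤ N, IsTangentFrame (x n) (v n) := by
    intro n
    induction n with
    | zero => exact fun _ => hx0 ▸ hv0 ▸ ⟨hx₀, orthonormal_iff_ite.mpr hv₀, hv₀x⟩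
    | succ n ih => exact fun hn => (step n hn (ih (Nat.le_of_succ_le hn))).1
  intro n hn i
  have hxn := (frame n hn.le).norm_eq_one
  calc ‖v (n + 1) i - v n i‖ ≤ (3 ^ ((i : ℕ) + 1) - 1) * (2 * (‖J (x n)‖ + ‖F (x n)‖) * τ) :=
        (step n hn (frame n hn.le)).2 i
    _ ≤ 3 ^ k * (2 * (‖J x₀‖ + 4 * L) * τ) := by
        have h3 : (3 : ℝ) ^ ((i : ℕ) + 1) - 1 ≤ 3 ^ k :=
          (sub_le_self _ zero_le_one).trans (pow_le_pow_right₀ (by norm_num) i.isLt)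
        have hJF : ‖J (x n)‖ + ‖F (x n)‖ ≤ ‖J x₀‖ + 4 * L := by linarith [hJ _ hxn, hF _ hxn]
        gcongr
    _ = 3 ^ k * (2 * (‖J x₀‖ + 4 * L)) * τ := (mul_assoc _ _ _).symm

theorem hisd_stmt14
    (d k : ℕ) (hd : 1 ≤ d) (hk : 1 ≤ k) (hkd : k ≤ d)
    (F : EuclideanSpace ℝ (Fin d) → EuclideanSpace ℝ (Fin d))
    (J : EuclideanSpace ℝ (Fin d) → (EuclideanSpace ℝ (Fin d) →L[ℝ] EuclideanSpace ℝ (Fin d)))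
    (hJsymm : ∀ x u w, ⟪J x u, w⟫ = ⟪u, J x w⟫)
    (L : ℝ) (hL : 0 < L)
    (hLip : ∀ x₁ x₂ : EuclideanSpace ℝ (Fin d), ‖J x₂ - J x₁‖ + ‖F x₂ - F x₁‖ ≤ L * ‖x₂ - x₁‖)
    (hgrow : ∀ x : EuclideanSpace ℝ (Fin d), ‖F x‖ ≤ L * (1 + ‖x‖))
    (T : ℝ) (hT : 0 < T)
    (x₀ : EuclideanSpace ℝ (Fin d)) (hx₀ : ‖x₀‖ = 1)
    (v₀ : Fin k → EuclideanSpace ℝ (Fin d))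
    (hv₀ : ∀ i j : Fin k, ⟪v₀ i, v₀ j⟫ = if i = j then (1:ℝ) else 0)
    (hv₀x : ∀ i : Fin k, ⟪v₀ i, x₀⟫ = 0) :
    ∃ τ₀ > (0:ℝ), ∃ Q > (0:ℝ), ∀ (N : ℕ) (τ : ℝ), 0 < N → τ = T / N → τ ≤ τ₀ →
      ∀ (x : ℕ → EuclideanSpace ℝ (Fin d)) (v : ℕ → Fin k → EuclideanSpace ℝ (Fin d)),
        x 0 = x₀ → v 0 = v₀ →
        (∀ n < N,
          let xt := x n + τ • (F (x n) - (2:ℝ) • ∑ j, ⟪v n j, F (x n)⟫ • v n j)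
          xt ≠ 0 ∧ x (n+1) = ‖xt‖⁻¹ • xt) →
        (∀ n < N, ∀ i : Fin k,
          let vt := v n i + τ • J (x n) (v n i)
          let vh := vt - ⟪vt, x (n+1)⟫ • x (n+1)
          let w := vh - ∑ j ∈ Finset.Iio i, ⟪vh, v (n+1) j⟫ • v (n+1) j
          w ≠ 0 ∧ v (n+1) i = ‖w‖⁻¹ • w) →
        ∀ n < N, ∀ i : Fin k, ‖v (n+1) i - v n i‖ ≤ Q * τ :=
  hisd_stmt14_general d k F J L hL hLip hgrow T hT x₀ hx₀ v₀ hv₀ hv₀x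
end
end

section
/- Under Assumption A, there exist τ₀ > 0 and Q > 0, depending only on d, k, L and T, such that for every N ∈ ℕ with τ = T/N ≤ τ₀, the iterates of the constrained discrete HiSD scheme satisfy, for all 1 ≤ j < i ≤ k and 1 ≤ n ≤ N, |v̂_{j,n}ᵀ v_{i,n−1} − τ (J(x_{n−1}) v_{j,n−1})ᵀ v_{i,n−1}| ≤ Q τ². -/
/-!
Since `v_{j,n-1} ⟂ v_{i,n-1}` and vector transport only removes the `x_n`-component of
`ṽ_{j,n}`, the defect equals `-⟪ṽ_{j,n}, x_n⟫ ⟪x_n, v_{i,n-1}⟫`, and both factors are `O(τ)`.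
Indeed `v_{i,n-1} ⟂ x_{n-1}` gives `⟪x̃_n, v_{i,n-1}⟫ = -τ ⟪F(x_{n-1}), v_{i,n-1}⟫`, while
`‖x̃_n‖ ≥ ⟪x̃_n, x_{n-1}⟫ ≥ 1 - τ ‖F(x_{n-1})‖ ≥ 1/2`; and `⟪ṽ_{j,n}, x_n⟫` is
`⟪v_{j,n-1}, x_n⟫ + O(τ)`. The constants are uniform in `n` because every `x_n` is a unit vector,
so `‖F(x_n)‖ ≤ 2L` and `‖J(x_n)‖ ≤ ‖J(x₀)‖ + 2L`. That `x_n` stays on the sphere with an orthonormal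
tangent frame `v_{·,n}` is seen by recognising the Gram–Schmidt step of the scheme as Mathlib's
`gramSchmidtNormed` applied to the transported vectors, which all lie in `x_nᗮ`.
-/

open scoped RealInnerProductSpace BigOperators

noncomputable section

open Finset InnerProductSpace Submodule

section GramSchmidt

variable {𝕜 E ι : Type*} [RCLike 𝕜] [NormedAddCommGroup E]
  [LinearOrder ι] [LocallyFiniteOrderBot ι] [WellFoundedLT ι]

theorem orthonormal_gramSchmidtNormed_of_ne_zero [InnerProductSpace 𝕜 E] {f : ι → E}
    (h : ∀ i, gramSchmidtNormed 𝕜 f i ≠ 0) : Orthonormal 𝕜 (gramSchmidtNormed 𝕜 f) :=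
  (gramSchmidtNormed_orthonormal' f).comp (fun i => ⟨i, h i⟩)
    fun _ _ hij => congrArg Subtype.val hij

theorem gramSchmidtNormed_mem [InnerProductSpace 𝕜 E] {f : ι → E} {K : Submodule 𝕜 E}
    (hf : ∀ i, f i ∈ K) (i : ι) : gramSchmidtNormed 𝕜 f i ∈ K := by
  have hspan : span 𝕜 (Set.range f) ≤ K := span_le.2 (Set.range_subset_iff.2 hf)
  refine hspan ?_
  rw [← span_gramSchmidt 𝕜 f, ← span_gramSchmidtNormed_range]
  exact subset_span (Set.mem_range_self i)

variable [InnerProductSpace ℝ E]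

theorem starProjection_singleton_eq_inner_smul_normalize (g z : E) :
    (ℝ ∙ g).starProjection z = ⟪z, ‖g‖⁻¹ • g⟫ • ‖g‖⁻¹ • g := by
  rw [starProjection_singleton, real_inner_smul_right, smul_smul, real_inner_comm]
  simp only [RCLike.ofReal_real_eq_id, id]
  congr 1
  ring

theorem eq_gramSchmidtNormed_of_forall {f v : ι → E}
    (hv : ∀ i, v i = ‖f i - ∑ j ∈ Iio i, ⟪f i, v j⟫ • v j‖⁻¹ •
      (f i - ∑ j ∈ Iio i, ⟪f i, v j⟫ • v j)) :
    v = gramSchmidtNormed ℝ f := by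
  funext i
  induction i using WellFoundedLT.induction with
  | _ i ih =>
    have hsum : ∑ j ∈ Iio i, ⟪f i, v j⟫ • v j =
        ∑ j ∈ Iio i, (ℝ ∙ gramSchmidt ℝ f j).starProjection (f i) :=
      sum_congr rfl fun j hj => by
        rw [ih j (mem_Iio.1 hj), starProjection_singleton_eq_inner_smul_normalize]; rfl
    rw [hv i, hsum, ← gramSchmidt_def]
    rfl

end GramSchmidt

section Scheme

variable {E ι : Type*} [NormedAddCommGroup E] [InnerProductSpace ℝ E]

def IsTangentFrame_s16 (x : E) (v : ι → E) : Prop :=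
  ‖x‖ = 1 ∧ Orthonormal ℝ v ∧ ∀ i, ⟪v i, x⟫ = 0

theorem inner_sub_inner_smul_self_eq_zero {y : E} (hy : ‖y‖ = 1) (u : E) :
    ⟪u - ⟪u, y⟫ • y, y⟫ = 0 := by
  rw [inner_sub_left, real_inner_smul_left, real_inner_self_eq_norm_sq, hy]
  ring

theorem isTangentFrame_of_gramSchmidt [LinearOrder ι] [LocallyFiniteOrderBot ι] [WellFoundedLT ι]
    {xt y : E} {vt u : ι → E} (hxt : xt ≠ 0) (hy : y = ‖xt‖⁻¹ • xt)
    (hu : ∀ i, let vh := vt i - ⟪vt i, y⟫ • y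
      let w := vh - ∑ j ∈ Iio i, ⟪vh, u j⟫ • u j
      w ≠ 0 ∧ u i = ‖w‖⁻¹ • w) :
    IsTangentFrame_s16 y u := by
  have hy1 : ‖y‖ = 1 := hy ▸ norm_smul_inv_norm hxt
  have hGS : u = gramSchmidtNormed ℝ (fun i => vt i - ⟪vt i, y⟫ • y) :=
    eq_gramSchmidtNormed_of_forall fun i => (hu i).2
  have hunit : ∀ i, ‖u i‖ = 1 := fun i => by rw [(hu i).2]; exact norm_smul_inv_norm (hu i).1
  refine ⟨hy1, hGS ▸ orthonormal_gramSchmidtNormed_of_ne_zero fun i => ?_, fun i => ?_⟩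
  · rw [← hGS, ← norm_ne_zero_iff, hunit i]
    exact one_ne_zero
  · rw [← mem_orthogonal_singleton_iff_inner_left, hGS]
    exact gramSchmidtNormed_mem (fun i => mem_orthogonal_singleton_iff_inner_left.2
      (inner_sub_inner_smul_self_eq_zero hy1 _)) i

variable [Fintype ι]

def hisdDirection (v : ι → E) (z : E) : E :=
  z - (2 : ℝ) • ∑ j, ⟪v j, z⟫ • v j

variable {x z : E} {v : ι → E} {τ : ℝ}

theorem inner_add_smul_hisdDirection_right (hv : Orthonormal ℝ v) (hvx : ∀ j, ⟪v j, x⟫ = 0)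
    (i : ι) : ⟪x + τ • hisdDirection v z, v i⟫ = -(τ * ⟪z, v i⟫) := by
  rw [hisdDirection, inner_add_left, real_inner_smul_left, inner_sub_left, real_inner_smul_left,
    hv.inner_left_fintype, conj_trivial, real_inner_comm, hvx i, real_inner_comm]
  ring

theorem one_sub_le_norm_add_smul_hisdDirection (hx : ‖x‖ = 1) (hvx : ∀ j, ⟪v j, x⟫ = 0)
    (hτ : 0 ≤ τ) : 1 - τ * ‖z‖ ≤ ‖x + τ • hisdDirection v z‖ := by
  have hSx : ⟪hisdDirection v z, x⟫ = ⟪z, x⟫ := by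
    simp [hisdDirection, inner_sub_left, real_inner_smul_left, sum_inner, hvx]
  calc 1 - τ * ‖z‖ ≤ 1 + τ * ⟪z, x⟫ := by
        have := neg_le_of_abs_le (abs_real_inner_le_norm z x)
        rw [hx, mul_one] at this
        nlinarith
    _ = ⟪x + τ • hisdDirection v z, x⟫ := by
        rw [inner_add_left, real_inner_smul_left, hSx, real_inner_self_eq_norm_sq, hx]
        ring
    _ ≤ ‖x + τ • hisdDirection v z‖ := by
        simpa [hx] using real_inner_le_norm (x + τ • hisdDirection v z) x

theorem abs_inner_retract_le (hframe : IsTangentFrame_s16 x v) (hτ : 0 ≤ τ)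
    (hsmall : τ * ‖z‖ ≤ 1 / 2) (i : ι) :
    |⟪‖x + τ • hisdDirection v z‖⁻¹ • (x + τ • hisdDirection v z), v i⟫| ≤ 2 * τ * ‖z‖ := by
  obtain ⟨hx, hv, hvx⟩ := hframe
  have hxt : 1 / 2 ≤ ‖x + τ • hisdDirection v z‖ := by
    linarith [one_sub_le_norm_add_smul_hisdDirection (v := v) (z := z) hx hvx hτ]
  have hzv : |⟪z, v i⟫| ≤ ‖z‖ := by simpa [hv.1 i] using abs_real_inner_le_norm z (v i)
  rw [real_inner_smul_left, inner_add_smul_hisdDirection_right hv hvx, abs_mul, abs_inv,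
    abs_norm, abs_neg, abs_mul, abs_of_nonneg hτ]
  calc ‖x + τ • hisdDirection v z‖⁻¹ * (τ * |⟪z, v i⟫|) ≤ 2 * (τ * ‖z‖) := by
        gcongr
        exact inv_le_of_inv_le₀ (by norm_num) (by linarith)
    _ = 2 * τ * ‖z‖ := by ring

theorem abs_inner_transport_sub_le (A : E →L[ℝ] E) (hframe : IsTangentFrame_s16 x v) (hτ : 0 ≤ τ)
    (hsmall : τ * ‖z‖ ≤ 1 / 2) {y : E}
    (hy : y = ‖x + τ • hisdDirection v z‖⁻¹ • (x + τ • hisdDirection v z)) {i j : ι}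
    (hji : j ≠ i) :
    |⟪(v j + τ • A (v j)) - ⟪v j + τ • A (v j), y⟫ • y, v i⟫ - τ * ⟪A (v j), v i⟫| ≤
      2 * τ * ‖z‖ * (2 * τ * ‖z‖ + τ * ‖A‖) := by
  have hy1 : ‖y‖ = 1 := by
    refine hy ▸ norm_smul_inv_norm (norm_pos_iff.1 ?_)
    linarith [one_sub_le_norm_add_smul_hisdDirection (v := v) (z := z) hframe.1 hframe.2.2 hτ]
  have hdrift : ∀ a, |⟪y, v a⟫| ≤ 2 * τ * ‖z‖ := hy ▸ abs_inner_retract_le hframe hτ hsmall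
  have hAv : |⟪A (v j), y⟫| ≤ ‖A‖ := by
    calc |⟪A (v j), y⟫| ≤ ‖A (v j)‖ * ‖y‖ := abs_real_inner_le_norm _ _
      _ ≤ ‖A‖ * ‖v j‖ * ‖y‖ := by gcongr; exact A.le_opNorm _
      _ = ‖A‖ := by rw [hframe.2.1.1 j, hy1, mul_one, mul_one]
  have hvt : |⟪v j + τ • A (v j), y⟫| ≤ 2 * τ * ‖z‖ + τ * ‖A‖ := by
    rw [inner_add_left, real_inner_smul_left, real_inner_comm]
    refine (abs_add_le _ _).trans ?_
    rw [abs_mul, abs_of_nonneg hτ]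
    gcongr
    exact hdrift j
  have herr : ⟪(v j + τ • A (v j)) - ⟪v j + τ • A (v j), y⟫ • y, v i⟫ - τ * ⟪A (v j), v i⟫ =
      -(⟪y, v i⟫ * ⟪v j + τ • A (v j), y⟫) := by
    rw [inner_sub_left, inner_add_left, real_inner_smul_left, real_inner_smul_left,
      hframe.2.1.2 hji]
    ring
  rw [herr, abs_neg, abs_mul]
  exact mul_le_mul (hdrift i) hvt (abs_nonneg _) (by positivity)

end Scheme

theorem hisd_stmt16_general
    (d k : ℕ)
    (F : EuclideanSpace ℝ (Fin d) → EuclideanSpace ℝ (Fin d))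
    (J : EuclideanSpace ℝ (Fin d) → (EuclideanSpace ℝ (Fin d) →L[ℝ] EuclideanSpace ℝ (Fin d)))
    (L : ℝ) (hL : 0 < L)
    (hLip : ∀ x₁ x₂ : EuclideanSpace ℝ (Fin d), ‖J x₂ - J x₁‖ + ‖F x₂ - F x₁‖ ≤ L * ‖x₂ - x₁‖)
    (hgrow : ∀ x : EuclideanSpace ℝ (Fin d), ‖F x‖ ≤ L * (1 + ‖x‖))
    (T : ℝ) (hT : 0 < T)
    (x₀ : EuclideanSpace ℝ (Fin d)) (hx₀ : ‖x₀‖ = 1)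
    (v₀ : Fin k → EuclideanSpace ℝ (Fin d))
    (hv₀ : ∀ i j : Fin k, ⟪v₀ i, v₀ j⟫ = if i = j then (1:ℝ) else 0)
    (hv₀x : ∀ i : Fin k, ⟪v₀ i, x₀⟫ = 0) :
    ∃ τ₀ > (0:ℝ), ∃ Q > (0:ℝ), ∀ (N : ℕ) (τ : ℝ), 0 < N → τ = T / N → τ ≤ τ₀ →
      ∀ (x : ℕ → EuclideanSpace ℝ (Fin d)) (v : ℕ → Fin k → EuclideanSpace ℝ (Fin d)),
        x 0 = x₀ → v 0 = v₀ →
        (∀ n < N,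
          let xt := x n + τ • (F (x n) - (2:ℝ) • ∑ j, ⟪v n j, F (x n)⟫ • v n j)
          xt ≠ 0 ∧ x (n+1) = ‖xt‖⁻¹ • xt) →
        (∀ n < N, ∀ i : Fin k,
          let vt := v n i + τ • J (x n) (v n i)
          let vh := vt - ⟪vt, x (n+1)⟫ • x (n+1)
          let w := vh - ∑ j ∈ Finset.Iio i, ⟪vh, v (n+1) j⟫ • v (n+1) j
          w ≠ 0 ∧ v (n+1) i = ‖w‖⁻¹ • w) →
        ∀ n < N, ∀ i j : Fin k, j < i →
          let vt := v n j + τ • J (x n) (v n j)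
          let vh := vt - ⟪vt, x (n+1)⟫ • x (n+1)
          |⟪vh, v n i⟫ - τ * ⟪J (x n) (v n j), v n i⟫| ≤ Q * τ^2 := by
  refine ⟨1 / (4 * L), by positivity, 4 * L * (6 * L + ‖J x₀‖), by positivity, ?_⟩
  intro N τ _ hτ hτ₀ x v hx0 hv0 hxrec hvrec n hn i j hji
  have hτ0 : 0 ≤ τ := hτ ▸ by positivity
  have frame : ∀ m ≤ N, IsTangentFrame_s16 (x m) (v m)
    | 0, _ => hx0 ▸ hv0 ▸ ⟨hx₀, orthonormal_iff_ite.2 hv₀, hv₀x⟩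
    | p + 1, hp => isTangentFrame_of_gramSchmidt (hxrec p hp).1 (hxrec p hp).2 (hvrec p hp)
  have hxn : ‖x n‖ = 1 := (frame n hn.le).1
  have hF : ‖F (x n)‖ ≤ 2 * L := by linarith [hxn ▸ hgrow (x n)]
  have hJ : ‖J (x n)‖ ≤ ‖J x₀‖ + 2 * L :=
    calc ‖J (x n)‖ ≤ ‖J x₀‖ + ‖J (x n) - J x₀‖ := norm_le_insert' _ _
      _ ≤ ‖J x₀‖ + L * ‖x n - x₀‖ := by linarith [hLip x₀ (x n), norm_nonneg (F (x n) - F x₀)]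
      _ ≤ ‖J x₀‖ + L * 2 := by gcongr; linarith [norm_sub_le (x n) x₀]
      _ = ‖J x₀‖ + 2 * L := by ring
  have hsmall : τ * ‖F (x n)‖ ≤ 1 / 2 := by
    calc τ * ‖F (x n)‖ ≤ 1 / (4 * L) * (2 * L) := by gcongr
      _ = 1 / 2 := by field_simp; ring
  refine (abs_inner_transport_sub_le (J (x n)) (frame n hn.le) hτ0 hsmall (hxrec n hn).2
    hji.ne).trans ?_
  calc 2 * τ * ‖F (x n)‖ * (2 * τ * ‖F (x n)‖ + τ * ‖J (x n)‖)
      ≤ 2 * τ * (2 * L) * (2 * τ * (2 * L) + τ * (‖J x₀‖ + 2 * L)) := by gcongr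
    _ = 4 * L * (6 * L + ‖J x₀‖) * τ ^ 2 := by ring

theorem hisd_stmt16
    (d k : ℕ) (hd : 1 ≤ d) (hk : 1 ≤ k) (hkd : k ≤ d)
    (F : EuclideanSpace ℝ (Fin d) → EuclideanSpace ℝ (Fin d))
    (J : EuclideanSpace ℝ (Fin d) → (EuclideanSpace ℝ (Fin d) →L[ℝ] EuclideanSpace ℝ (Fin d)))
    (hJsymm : ∀ x u w, ⟪J x u, w⟫ = ⟪u, J x w⟫)
    (L : ℝ) (hL : 0 < L)
    (hLip : ∀ x₁ x₂ : EuclideanSpace ℝ (Fin d), ‖J x₂ - J x₁‖ + ‖F x₂ - F x₁‖ ≤ L * ‖x₂ - x₁‖)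
    (hgrow : ∀ x : EuclideanSpace ℝ (Fin d), ‖F x‖ ≤ L * (1 + ‖x‖))
    (T : ℝ) (hT : 0 < T)
    (x₀ : EuclideanSpace ℝ (Fin d)) (hx₀ : ‖x₀‖ = 1)
    (v₀ : Fin k → EuclideanSpace ℝ (Fin d))
    (hv₀ : ∀ i j : Fin k, ⟪v₀ i, v₀ j⟫ = if i = j then (1:ℝ) else 0)
    (hv₀x : ∀ i : Fin k, ⟪v₀ i, x₀⟫ = 0) :
    ∃ τ₀ > (0:ℝ), ∃ Q > (0:ℝ), ∀ (N : ℕ) (τ : ℝ), 0 < N → τ = T / N → τ ≤ τ₀ →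
      ∀ (x : ℕ → EuclideanSpace ℝ (Fin d)) (v : ℕ → Fin k → EuclideanSpace ℝ (Fin d)),
        x 0 = x₀ → v 0 = v₀ →
        (∀ n < N,
          let xt := x n + τ • (F (x n) - (2:ℝ) • ∑ j, ⟪v n j, F (x n)⟫ • v n j)
          xt ≠ 0 ∧ x (n+1) = ‖xt‖⁻¹ • xt) →
        (∀ n < N, ∀ i : Fin k,
          let vt := v n i + τ • J (x n) (v n i)
          let vh := vt - ⟪vt, x (n+1)⟫ • x (n+1)
          let w := vh - ∑ j ∈ Finset.Iio i, ⟪vh, v (n+1) j⟫ • v (n+1) j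
          w ≠ 0 ∧ v (n+1) i = ‖w‖⁻¹ • w) →
        ∀ n < N, ∀ i j : Fin k, j < i →
          let vt := v n j + τ • J (x n) (v n j)
          let vh := vt - ⟪vt, x (n+1)⟫ • x (n+1)
          |⟪vh, v n i⟫ - τ * ⟪J (x n) (v n j), v n i⟫| ≤ Q * τ^2 :=
  hisd_stmt16_general d k F J L hL hLip hgrow T hT x₀ hx₀ v₀ hv₀ hv₀x
end
end

section
/- Under Assumption A, there exist τ₀ > 0 and Q > 0, depending only on d, k, L and T, such that for every N ∈ ℕ with τ = T/N ≤ τ₀, the iterates of the constrained discrete HiSD scheme satisfy, for all 1 ≤ i ≤ k and 1 ≤ n ≤ N, ‖(v_{i,n} − v_{i,n−1})/τ − R_i^{n−1} − L_i^{n−1} + x_{n−1} x_{n−1}ᵀ J(x_{n−1}) v_{i,n−1} − x_{n−1} (v_{i,n−1}ᵀ F(x_{n−1}))‖ ≤ Q τ; that is, combining the Rayleigh-quotient step, the vector transport and the Gram–Schmidt step recovers, up to an O(τ) error, the Euler discretization of the constrained directional dynamics dv_i/dt = R_i + L_i − x xᵀ J(x) v_i + x v_iᵀ F(x). -/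
/-!
One step of the scheme moves the orthonormal frame `v ⊥ x` by `τ J v`, projects it onto the
orthogonal complement of the new point `x'` and re-orthonormalises it by Gram–Schmidt. Since
`x' = x + τ (S - ⟪x, S⟫ x) + O(τ²)` for the reflected force `S` and `⟪v i, S⟫ = -⟪v i, F⟫`, the
projection moves `v i` by `τ (J v i - (⟪J v i, x⟫ - ⟪v i, F⟫) x) + O(τ²)`. Gram–Schmidt at an
orthonormal frame has derivative `h ↦ h i - ⟪v i, h i⟫ v i - ∑_{j<i} (⟪h i, v j⟫ + ⟪h j, v i⟫) v j`,
and the symmetry of `J` turns the last coefficient into `2 ⟪v j, J v i⟫`: this is the Euler step of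
the constrained dynamics. All remainders are `O(τ²)` with constants depending only on `k` and on a
bound for `J` and `F` on the unit sphere, where the iterates stay; the error of the `i`-th
Gram–Schmidt vector is fed by those of the earlier ones, which costs a factor `4 ^ i`.
-/

open scoped RealInnerProductSpace

noncomputable section

open Finset

variable {E : Type*} [NormedAddCommGroup E] [InnerProductSpace ℝ E] {k : ℕ}

theorem norm_inv_norm_smul_add_sub_le {a p : E} (ha : ‖a‖ = 1) (hp : ‖p‖ ≤ 1 / 2) :
    ‖‖a + p‖⁻¹ • (a + p) - (a + p - ⟪a, p⟫ • a)‖ ≤ 4 * ‖p‖ ^ 2 := by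
  set s := ‖a + p‖
  set c := ⟪a, p⟫
  have hc : |c| ≤ ‖p‖ := by simpa [ha] using abs_real_inner_le_norm a p
  have hs : |s - 1| ≤ ‖p‖ := by simpa [ha] using abs_norm_sub_norm_le (a + p) a
  have hs_sq : s ^ 2 = 1 + 2 * c + ‖p‖ ^ 2 := by rw [norm_add_sq_real, ha]; ring
  have hs_pos : 0 < s := by linarith [(abs_le.mp hs).1]
  -- the identity `h` below exhibits `1 - s + c s` as `O(‖p‖²)`, since `|c|, |s - 1| ≤ ‖p‖`
  have hnum : |1 - s + c * s| ≤ 3 * ‖p‖ ^ 2 := by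
    have h : (1 - s + c * s) * (s + 1) = c * (s - 1) + c * (2 * c + ‖p‖ ^ 2) - ‖p‖ ^ 2 := by
      linear_combination (c - 1) * hs_sq
    have hbound : |c * (s - 1) + c * (2 * c + ‖p‖ ^ 2) - ‖p‖ ^ 2| ≤ 9 / 2 * ‖p‖ ^ 2 := by
      rw [abs_le] at hc hs ⊢
      constructor <;> nlinarith [norm_nonneg p]
    have hs1 : 3 / 2 ≤ s + 1 := by linarith [(abs_le.mp hs).1]
    have habs : |1 - s + c * s| * (s + 1) = |c * (s - 1) + c * (2 * c + ‖p‖ ^ 2) - ‖p‖ ^ 2| := by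
      rw [← h, abs_mul, abs_of_pos (by linarith : (0:ℝ) < s + 1)]
    nlinarith [abs_nonneg (1 - s + c * s)]
  have hvec : s⁻¹ • (a + p) - (a + p - c • a) = (s⁻¹ - 1 + c) • (a + p) - c • p := by module
  have hscal : |s⁻¹ - 1 + c| * s = |1 - s + c * s| := by
    rw [← abs_of_pos hs_pos, ← abs_mul, abs_of_pos hs_pos, add_mul, sub_mul,
      inv_mul_cancel₀ hs_pos.ne', one_mul]
  calc ‖s⁻¹ • (a + p) - (a + p - c • a)‖
      ≤ |s⁻¹ - 1 + c| * s + |c| * ‖p‖ := by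
        rw [hvec]
        refine (norm_sub_le _ _).trans_eq ?_
        rw [norm_smul, norm_smul, Real.norm_eq_abs, Real.norm_eq_abs]
    _ ≤ 3 * ‖p‖ ^ 2 + ‖p‖ * ‖p‖ := by
        rw [hscal]; gcongr
    _ = 4 * ‖p‖ ^ 2 := by ring

theorem norm_sub_inner_smul_le {a : E} (ha : ‖a‖ = 1) (d : E) : ‖d - ⟪a, d⟫ • a‖ ≤ 2 * ‖d‖ := by
  refine (norm_sub_le _ _).trans ?_
  rw [norm_smul, ha, mul_one, Real.norm_eq_abs]
  linarith [(abs_real_inner_le_norm a d).trans_eq (by rw [ha, one_mul])]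

theorem norm_inv_norm_smul_add_sub_le' {a p : E} (ha : ‖a‖ = 1) (hp : ‖p‖ ≤ 1 / 2) (q : E) :
    ‖‖a + p‖⁻¹ • (a + p) - (a + q - ⟪a, q⟫ • a)‖ ≤ 4 * ‖p‖ ^ 2 + 2 * ‖p - q‖ := by
  have h : a + p - ⟪a, p⟫ • a - (a + q - ⟪a, q⟫ • a) = (p - q) - ⟪a, p - q⟫ • a := by
    rw [inner_sub_right]; module
  calc _ ≤ ‖‖a + p‖⁻¹ • (a + p) - (a + p - ⟪a, p⟫ • a)‖
        + ‖a + p - ⟪a, p⟫ • a - (a + q - ⟪a, q⟫ • a)‖ := norm_sub_le_norm_sub_add_norm_sub _ _ _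
    _ ≤ _ := by
        rw [h]
        gcongr
        exacts [norm_inv_norm_smul_add_sub_le ha hp, norm_sub_inner_smul_le ha _]

/-- Projection of `v + τ a` onto the orthogonal complement of a unit vector `x' ≈ x + τ z`, to first
order in `τ`. -/
theorem norm_projection_sub_le {x x' v a z : E} (hx : ‖x‖ = 1) (hx' : ‖x'‖ = 1) (hv : ‖v‖ = 1)
    (hvx : ⟪v, x⟫ = 0) {τ : ℝ} (hτ : 0 ≤ τ) :
    ‖(v + τ • a) - ⟪v + τ • a, x'⟫ • x' - (v + τ • (a - (⟪v, z⟫ + ⟪a, x⟫) • x))‖ ≤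
      ‖x' - x - τ • z‖ + τ * (2 * ‖a‖ + ‖z‖) * ‖x' - x‖ := by
  have h : (v + τ • a) - ⟪v + τ • a, x'⟫ • x' - (v + τ • (a - (⟪v, z⟫ + ⟪a, x⟫) • x)) =
      -((⟪v, x' - x - τ • z⟫ + τ * ⟪a, x' - x⟫) • x' + (τ * (⟪v, z⟫ + ⟪a, x⟫)) • (x' - x)) := by
    simp only [inner_add_left, inner_sub_right, inner_smul_left, inner_smul_right, hvx,
      RCLike.conj_to_real]
    module
  have h₁ : |⟪v, x' - x - τ • z⟫| ≤ ‖x' - x - τ • z‖ := by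
    simpa [hv] using abs_real_inner_le_norm v (x' - x - τ • z)
  have h₂ := abs_real_inner_le_norm a (x' - x)
  have h₃ : |⟪v, z⟫ + ⟪a, x⟫| ≤ ‖z‖ + ‖a‖ := by
    refine (abs_add_le _ _).trans (add_le_add ?_ ?_)
    · simpa [hv] using abs_real_inner_le_norm v z
    · simpa [hx] using abs_real_inner_le_norm a x
  rw [h, norm_neg]
  refine (norm_add_le _ _).trans ?_
  rw [norm_smul, norm_smul, hx', mul_one, Real.norm_eq_abs, Real.norm_eq_abs, abs_mul,
    abs_of_nonneg hτ]
  have h₄ := abs_add_le ⟪v, x' - x - τ • z⟫ (τ * ⟪a, x' - x⟫)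
  rw [abs_mul, abs_of_nonneg hτ] at h₄
  nlinarith [norm_nonneg (x' - x), norm_nonneg a, mul_nonneg hτ (norm_nonneg (x' - x))]

theorem Orthonormal.inner_sum_smul_eq_zero {ι : Type*} {v : ι → E} (hv : Orthonormal ℝ v)
    {s : Finset ι} {i : ι} (hi : i ∉ s) (c : ι → ℝ) : ⟪v i, ∑ j ∈ s, c j • v j⟫ = 0 := by
  rw [inner_sum]
  exact sum_eq_zero fun j hj => by
    rw [real_inner_smul_right, hv.2 (ne_of_mem_of_not_mem hj hi).symm, mul_zero]

theorem Orthonormal.norm_sum_smul_le {ι : Type*} {v : ι → E} (hv : Orthonormal ℝ v)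
    (s : Finset ι) {c : ι → ℝ} {C : ℝ} (hc : ∀ j ∈ s, |c j| ≤ C) :
    ‖∑ j ∈ s, c j • v j‖ ≤ #s * C := by
  refine (norm_sum_le_of_le s fun j hj => ?_).trans_eq (by rw [sum_const, nsmul_eq_mul])
  rw [norm_smul, hv.1, mul_one, Real.norm_eq_abs]
  exact hc j hj

def gsResidual (y u : Fin k → E) (i : Fin k) : E :=
  y i - ∑ j ∈ Iio i, ⟪y i, u j⟫ • u j

def IsGramSchmidt (y u : Fin k → E) : Prop :=
  ∀ i, gsResidual y u i ≠ 0 ∧ u i = ‖gsResidual y u i‖⁻¹ • gsResidual y u i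

namespace IsGramSchmidt

variable {y u : Fin k → E}

theorem norm_eq_one (hu : IsGramSchmidt y u) (i : Fin k) : ‖u i‖ = 1 :=
  (hu i).2 ▸ norm_smul_inv_norm (hu i).1

theorem inner_eq_zero_of_lt (hu : IsGramSchmidt y u) {i j : Fin k} (hji : j < i) :
    ⟪u i, u j⟫ = 0 := by
  induction i using WellFoundedLT.induction generalizing j with | ind i ih
  have horth : ∀ l < i, ⟪u l, u j⟫ = if l = j then 1 else 0 := by
    intro l hl
    rcases lt_trichotomy l j with h | rfl | h
    · rw [real_inner_comm, ih j hji h, if_neg h.ne]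
    · rw [if_pos rfl, real_inner_self_eq_norm_sq, hu.norm_eq_one, one_pow]
    · rw [ih l hl h, if_neg h.ne']
  have hsum : ∑ l ∈ Iio i, ⟪y i, u l⟫ * ⟪u l, u j⟫ = ⟪y i, u j⟫ := by
    rw [sum_congr rfl fun l hl => by rw [horth l (mem_Iio.mp hl)]]
    simp [hji]
  simp only [(hu i).2, gsResidual, real_inner_smul_left, inner_sub_left, sum_inner, hsum,
    sub_self, mul_zero]

theorem orthonormal (hu : IsGramSchmidt y u) : Orthonormal ℝ u := by
  classical
  rw [orthonormal_iff_ite]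
  intro i j
  rcases lt_trichotomy i j with h | rfl | h
  · rw [real_inner_comm, hu.inner_eq_zero_of_lt h, if_neg h.ne]
  · rw [if_pos rfl, real_inner_self_eq_norm_sq, hu.norm_eq_one, one_pow]
  · rw [hu.inner_eq_zero_of_lt h, if_neg h.ne']

theorem inner_eq_zero {x : E} (hu : IsGramSchmidt y u) (hy : ∀ i, ⟪y i, x⟫ = 0) (i : Fin k) :
    ⟪u i, x⟫ = 0 := by
  induction i using WellFoundedLT.induction with | ind i ih
  have hsum : ∑ j ∈ Iio i, ⟪y i, u j⟫ * ⟪u j, x⟫ = 0 :=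
    sum_eq_zero fun j hj => by rw [ih j (mem_Iio.mp hj), mul_zero]
  simp only [(hu i).2, gsResidual, real_inner_smul_left, inner_sub_left, sum_inner, hy, hsum,
    sub_self, mul_zero]

end IsGramSchmidt

/-- The derivative at `τ = 0` of `gsResidual (v + τ • h) u`, where `u` is the Gram–Schmidt
orthonormalisation of `v + τ • h` and `v` is orthonormal. -/
def gsResidualVariation (v h : Fin k → E) (i : Fin k) : E :=
  h i - ∑ j ∈ Iio i, (⟪h i, v j⟫ + ⟪h j, v i⟫) • v j

/-- The derivative at `τ = 0` of the Gram–Schmidt orthonormalisation of `v + τ • h`, for `v`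
orthonormal. -/
def gsVariation (v h : Fin k → E) (i : Fin k) : E :=
  gsResidualVariation v h i - ⟪v i, gsResidualVariation v h i⟫ • v i

section Variation

variable {v h : Fin k → E} {K : ℝ}

theorem inner_gsResidualVariation_of_le (hv : Orthonormal ℝ v) {i j : Fin k} (hji : j ≤ i) :
    ⟪v i, gsResidualVariation v h j⟫ = ⟪v i, h j⟫ := by
  rw [gsResidualVariation, inner_sub_right, hv.inner_sum_smul_eq_zero (by simpa using hji),
    sub_zero]

theorem inner_gsVariation_of_lt (hv : Orthonormal ℝ v) {i j : Fin k} (hji : j < i) :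
    ⟪v i, gsVariation v h j⟫ = ⟪v i, h j⟫ := by
  rw [gsVariation, inner_sub_right, real_inner_smul_right, hv.2 hji.ne', mul_zero, sub_zero,
    inner_gsResidualVariation_of_le hv hji.le]

theorem norm_gsResidualVariation_le (hv : Orthonormal ℝ v) (hh : ∀ j, ‖h j‖ ≤ K) (i : Fin k) :
    ‖gsResidualVariation v h i‖ ≤ 2 * ((k + 1) * K) := by
  have hinner : ∀ j l, |⟪h j, v l⟫| ≤ K := fun j l =>
    (abs_real_inner_le_norm _ _).trans (by rw [hv.1, mul_one]; exact hh j)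
  have hsum := hv.norm_sum_smul_le (Iio i) (c := fun j => ⟪h i, v j⟫ + ⟪h j, v i⟫) (C := 2 * K)
    fun j _ => (abs_add_le _ _).trans (by linarith [hinner i j, hinner j i])
  have hcard : (#(Iio i) : ℝ) ≤ k := by rw [Fin.card_Iio]; exact_mod_cast i.isLt.le
  have hK : 0 ≤ K := (norm_nonneg _).trans (hh i)
  calc _ ≤ K + k * (2 * K) := (norm_sub_le _ _).trans (add_le_add (hh i) (hsum.trans (by gcongr)))
    _ ≤ 2 * ((k + 1) * K) := by nlinarith

theorem norm_gsVariation_le (hv : Orthonormal ℝ v) (hh : ∀ j, ‖h j‖ ≤ K) (i : Fin k) :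
    ‖gsVariation v h i‖ ≤ 4 * ((k + 1) * K) :=
  (norm_sub_inner_smul_le (hv.1 i) _).trans (by linarith [norm_gsResidualVariation_le hv hh i])

end Variation

section Perturbation

variable {y u v h : Fin k → E} {K τ : ℝ}

theorem norm_inner_smul_sub_le (hv : Orthonormal ℝ v) (hh : ∀ j, ‖h j‖ ≤ K) (hτ : 0 ≤ τ)
    {i j : Fin k} (hji : j < i) (huj : ‖u j‖ = 1) :
    ‖⟪y i, u j⟫ • u j - (τ * (⟪h i, v j⟫ + ⟪h j, v i⟫)) • v j‖ ≤
      ‖u j - v j - τ • gsVariation v h j‖ + 3 * K * τ * ‖u j - v j‖ + ‖y i - v i - τ • h i‖ := by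
  set a := ⟪h i, v j⟫ + ⟪h j, v i⟫
  set s := ⟪y i, u j⟫ - τ * a
  have hs : s = ⟪v i, u j - v j - τ • gsVariation v h j⟫ + τ * ⟪h i, u j - v j⟫ +
      ⟪y i - v i - τ • h i, u j⟫ := by
    simp only [s, a, inner_sub_left, inner_sub_right, real_inner_smul_left, real_inner_smul_right,
      inner_gsVariation_of_lt hv hji, hv.2 hji.ne', real_inner_comm (v i) (h j)]
    ring
  have hvec : ⟪y i, u j⟫ • u j - (τ * a) • v j = s • u j + (τ * a) • (u j - v j) := by
    simp only [s]; module
  have h₁ : |⟪v i, u j - v j - τ • gsVariation v h j⟫| ≤ ‖u j - v j - τ • gsVariation v h j‖ := by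
    simpa [hv.1 i] using abs_real_inner_le_norm (v i) (u j - v j - τ • gsVariation v h j)
  have h₂ : |⟪h i, u j - v j⟫| ≤ K * ‖u j - v j‖ :=
    (abs_real_inner_le_norm _ _).trans (by gcongr; exact hh i)
  have h₃ : |⟪y i - v i - τ • h i, u j⟫| ≤ ‖y i - v i - τ • h i‖ := by
    simpa [huj] using abs_real_inner_le_norm (y i - v i - τ • h i) (u j)
  have h₄ : |a| ≤ 2 * K := by
    have := abs_real_inner_le_norm (h i) (v j)
    have := abs_real_inner_le_norm (h j) (v i)
    rw [hv.1] at *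
    linarith [abs_add_le ⟪h i, v j⟫ ⟪h j, v i⟫, hh i, hh j]
  have hs_le : |s| ≤ ‖u j - v j - τ • gsVariation v h j‖ + τ * (K * ‖u j - v j‖) +
      ‖y i - v i - τ • h i‖ := by
    rw [hs]
    refine (abs_add_le _ _).trans (add_le_add ((abs_add_le _ _).trans (add_le_add h₁ ?_)) h₃)
    rw [abs_mul, abs_of_nonneg hτ]
    gcongr
  rw [hvec]
  refine (norm_add_le _ _).trans ?_
  rw [norm_smul, norm_smul, huj, mul_one, Real.norm_eq_abs, Real.norm_eq_abs, abs_mul,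
    abs_of_nonneg hτ]
  nlinarith [mul_le_mul_of_nonneg_left h₄ hτ, norm_nonneg (u j - v j)]

theorem norm_gsResidual_sub_le (hv : Orthonormal ℝ v) (hu : IsGramSchmidt y u) (hK : 1 ≤ K)
    (hτ : 0 ≤ τ) (hsmall : 6 * K * τ ≤ 1) (hh : ∀ j, ‖h j‖ ≤ K)
    (he : ∀ j, ‖y j - v j - τ • h j‖ ≤ K * τ ^ 2) (i : Fin k) :
    ‖gsResidual y u i - v i - τ • gsResidualVariation v h i‖ ≤
      3 / 2 * ∑ j ∈ Iio i, ‖u j - v j - τ • gsVariation v h j‖ +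
        13 * ((k + 1) * K) ^ 2 * τ ^ 2 := by
  set c := ((k : ℝ) + 1) * K
  have hc : K ≤ c := by simp only [c]; nlinarith [(Nat.cast_nonneg k : (0:ℝ) ≤ k)]
  have hKτ : 0 ≤ K * τ ^ 2 := by positivity
  have hc1 : 1 ≤ c := hK.trans hc
  have hvec : gsResidual y u i - v i - τ • gsResidualVariation v h i = (y i - v i - τ • h i) -
      ∑ j ∈ Iio i, (⟪y i, u j⟫ • u j - (τ * (⟪h i, v j⟫ + ⟪h j, v i⟫)) • v j) := by
    simp only [gsResidual, gsResidualVariation, smul_sub, smul_sum, sum_sub_distrib, smul_smul]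
    abel
  have hterm : ∀ j ∈ Iio i, ‖⟪y i, u j⟫ • u j - (τ * (⟪h i, v j⟫ + ⟪h j, v i⟫)) • v j‖ ≤
      3 / 2 * ‖u j - v j - τ • gsVariation v h j‖ + 13 * c * K * τ ^ 2 := by
    intro j hj
    have hd : ‖u j - v j‖ ≤ ‖u j - v j - τ • gsVariation v h j‖ + τ * (4 * c) := by
      refine (norm_le_norm_sub_add _ (τ • gsVariation v h j)).trans (add_le_add le_rfl ?_)
      rw [norm_smul, Real.norm_eq_abs, abs_of_nonneg hτ]
      exact mul_le_mul_of_nonneg_left (norm_gsVariation_le hv hh j) hτ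
    have hpair := norm_inner_smul_sub_le (y := y) hv hh hτ (mem_Iio.mp hj) (hu.norm_eq_one j)
    have hρ := norm_nonneg (u j - v j - τ • gsVariation v h j)
    nlinarith [he i, mul_le_mul_of_nonneg_left hd (by positivity : 0 ≤ 3 * K * τ),
      mul_le_mul_of_nonneg_right hsmall hρ, mul_le_mul_of_nonneg_right hc1 hKτ]
  have hcard : (#(Iio i) : ℝ) ≤ k := by rw [Fin.card_Iio]; exact_mod_cast i.isLt.le
  rw [hvec]
  refine (norm_sub_le _ _).trans ?_
  refine (add_le_add (he i) ((norm_sum_le _ _).trans (sum_le_sum hterm))).trans ?_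
  rw [sum_add_distrib, sum_const, nsmul_eq_mul, ← mul_sum]
  have hcK : 0 ≤ c * K * τ ^ 2 := by positivity
  have hc2 : c ^ 2 * τ ^ 2 = k * (c * K * τ ^ 2) + c * K * τ ^ 2 := by simp only [c]; ring
  nlinarith [mul_le_mul_of_nonneg_right hcard hcK, mul_le_mul_of_nonneg_right hc1 hKτ]

theorem sum_Iio_four_pow (i : Fin k) : ∑ j ∈ Iio i, (4:ℝ) ^ (j : ℕ) = (4 ^ (i : ℕ) - 1) / 3 := by
  have h : ∑ j ∈ Iio i, (4:ℝ) ^ (j : ℕ) = ∑ m ∈ range i, (4:ℝ) ^ m := by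
    rw [← Nat.Iio_eq_range, ← Fin.map_valEmbedding_Iio, sum_map]
    rfl
  rw [h, geom_sum_eq (by norm_num)]
  norm_num

theorem IsGramSchmidt.norm_sub_sub_smul_gsVariation_le (hv : Orthonormal ℝ v)
    (hu : IsGramSchmidt y u) (hK : 1 ≤ K) (hτ : 0 ≤ τ) (hsmall : 32 * ((k + 1) * K) * 4 ^ k * τ ≤ 1)
    (hh : ∀ j, ‖h j‖ ≤ K) (he : ∀ j, ‖y j - v j - τ • h j‖ ≤ K * τ ^ 2) (i : Fin k) :
    ‖u i - v i - τ • gsVariation v h i‖ ≤ 64 * ((k + 1) * K) ^ 2 * 4 ^ (i : ℕ) * τ ^ 2 := by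
  set c := ((k : ℝ) + 1) * K
  have hKc : K ≤ c := by simp only [c]; nlinarith [(Nat.cast_nonneg k : (0:ℝ) ≤ k)]
  induction i using WellFoundedLT.induction with | ind i ih
  have hc0 : 0 ≤ c * τ := by positivity
  have hcτ : 32 * c * 4 ^ (i : ℕ) * τ ≤ 1 :=
    hsmall.trans' (by gcongr; exacts [by norm_num, i.isLt.le])
  have hcτ' : c * τ ≤ 1 / 32 := by nlinarith [one_le_pow₀ (by norm_num : (1:ℝ) ≤ 4) (n := i)]
  set w := gsResidualVariation v h i
  set p := gsResidual y u i - v i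
  have hρ : ∑ j ∈ Iio i, ‖u j - v j - τ • gsVariation v h j‖ ≤
      64 * c ^ 2 * τ ^ 2 * ((4 ^ (i : ℕ) - 1) / 3) := by
    rw [← sum_Iio_four_pow, mul_sum]
    exact sum_le_sum fun j hj => (ih j (mem_Iio.mp hj)).trans_eq (by ring)
  have hε : ‖p - τ • w‖ ≤ 32 * c ^ 2 * 4 ^ (i : ℕ) * τ ^ 2 - 19 * c ^ 2 * τ ^ 2 := by
    have := norm_gsResidual_sub_le hv hu hK hτ (by nlinarith) hh he i
    linarith
  have hw : ‖τ • w‖ ≤ 2 * c * τ := by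
    rw [norm_smul, Real.norm_eq_abs, abs_of_nonneg hτ]
    nlinarith [norm_gsResidualVariation_le hv hh i]
  have hp : ‖p‖ ≤ 3 * c * τ := by
    have : 32 * c ^ 2 * 4 ^ (i : ℕ) * τ ^ 2 ≤ c * τ := by nlinarith
    nlinarith [norm_le_norm_sub_add p (τ • w)]
  have hnorm := norm_inv_norm_smul_add_sub_le' (hv.1 i) (p := p) (by nlinarith) (τ • w)
  rw [add_sub_cancel, ← (hu i).2, real_inner_smul_right,
    show v i + τ • w - (τ * ⟪v i, w⟫) • v i = v i + τ • gsVariation v h i by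
      rw [gsVariation]; module] at hnorm
  rw [sub_sub]
  nlinarith [norm_nonneg p]

end Perturbation

def reflectedForce (v : Fin k → E) (f : E) : E :=
  f - (2:ℝ) • ∑ j, ⟪v j, f⟫ • v j

/-- First-order velocity of `v i ↦ v i + τ A (v i)` followed by projection onto the orthogonal
complement of the new base point, when the base point `x` moves along `reflectedForce v f`. -/
def transportVelocity (A : E →L[ℝ] E) (f x : E) (v : Fin k → E) (i : Fin k) : E :=
  A (v i) - (⟪A (v i), x⟫ - ⟪v i, f⟫) • x

section Step

variable {v u : Fin k → E} {x f : E} {A : E →L[ℝ] E} {B τ : ℝ}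

theorem inner_reflectedForce (hv : Orthonormal ℝ v) (i : Fin k) :
    ⟪v i, reflectedForce v f⟫ = -⟪v i, f⟫ := by
  rw [reflectedForce, inner_sub_right, real_inner_smul_right, hv.inner_right_fintype]
  ring

theorem norm_reflectedForce_le (hv : Orthonormal ℝ v) (hf : ‖f‖ ≤ B) :
    ‖reflectedForce v f‖ ≤ (2 * k + 1) * B := by
  have hsum := hv.norm_sum_smul_le univ (c := fun j => ⟪v j, f⟫) (C := B) fun j _ =>
    (abs_real_inner_le_norm _ _).trans (by rw [hv.1, one_mul]; exact hf)
  rw [card_univ, Fintype.card_fin] at hsum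
  refine (norm_sub_le _ _).trans ?_
  rw [norm_smul, Real.norm_ofNat]
  linarith

theorem norm_transportVelocity_le (hx : ‖x‖ = 1) (hv : Orthonormal ℝ v) (hf : ‖f‖ ≤ B)
    (hA : ‖A‖ ≤ B) (i : Fin k) : ‖transportVelocity A f x v i‖ ≤ 3 * B := by
  have hAv : ‖A (v i)‖ ≤ B := (A.le_opNorm _).trans (by rw [hv.1, mul_one]; exact hA)
  have h₁ : |⟪A (v i), x⟫| ≤ B :=
    (abs_real_inner_le_norm _ _).trans (by rw [hx, mul_one]; exact hAv)
  have h₂ : |⟪v i, f⟫| ≤ B := (abs_real_inner_le_norm _ _).trans (by rw [hv.1, one_mul]; exact hf)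
  refine (norm_sub_le _ _).trans ?_
  rw [norm_smul, hx, mul_one, Real.norm_eq_abs]
  linarith [(abs_sub _ _).trans (add_le_add h₁ h₂)]

theorem norm_transport_sub_le {x' : E} (hx : ‖x‖ = 1) (hv : Orthonormal ℝ v)
    (hvx : ∀ i, ⟪v i, x⟫ = 0) (hf : ‖f‖ ≤ B) (hA : ‖A‖ ≤ B) (hτ : 0 ≤ τ)
    (hsmall : 2 * ((2 * k + 1) * B) * τ ≤ 1)
    (hx' : x' = ‖x + τ • reflectedForce v f‖⁻¹ • (x + τ • reflectedForce v f)) (i : Fin k) :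
    ‖(v i + τ • A (v i)) - ⟪v i + τ • A (v i), x'⟫ • x' - v i - τ • transportVelocity A f x v i‖ ≤
      20 * ((2 * k + 1) * B) ^ 2 * τ ^ 2 := by
  set S := reflectedForce v f
  set σ := (2 * (k : ℝ) + 1) * B
  set z := S - ⟪x, S⟫ • x
  have hB : 0 ≤ B := (norm_nonneg f).trans hf
  have hBσ : B ≤ σ := by simp only [σ]; nlinarith [(Nat.cast_nonneg k : (0:ℝ) ≤ k)]
  have hS : ‖S‖ ≤ σ := norm_reflectedForce_le hv hf
  have hτS : ‖τ • S‖ ≤ τ * σ := by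
    rw [norm_smul, Real.norm_eq_abs, abs_of_nonneg hτ]; exact mul_le_mul_of_nonneg_left hS hτ
  have hz : ‖z‖ ≤ 2 * σ := (norm_sub_inner_smul_le hx S).trans (by linarith)
  have hret : ‖x' - x - τ • z‖ ≤ 4 * (τ * σ) ^ 2 := by
    have h := norm_inv_norm_smul_add_sub_le hx (p := τ • S) (by linarith)
    rw [← hx', real_inner_smul_right,
      show x + τ • S - (τ * ⟪x, S⟫) • x = x + τ • z by simp only [z]; module] at h
    rw [sub_sub]
    exact h.trans (by gcongr)
  have hx'1 : ‖x'‖ = 1 := by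
    have : x + τ • S ≠ 0 := fun h0 => by
      have := norm_sub_norm_le x (-(τ • S))
      rw [sub_neg_eq_add, h0, norm_zero, norm_neg, hx] at this
      linarith
    exact hx' ▸ norm_smul_inv_norm this
  have hdx : ‖x' - x‖ ≤ 4 * (τ * σ) := by
    have := norm_le_norm_sub_add (x' - x) (τ • z)
    rw [norm_smul, Real.norm_eq_abs, abs_of_nonneg hτ] at this
    have hτσ : τ * σ ≤ 1 / 2 := by linarith
    nlinarith [mul_le_mul_of_nonneg_left hz hτ,
      mul_le_mul_of_nonneg_left hτσ (by positivity : 0 ≤ τ * σ)]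
  have hvz : ⟪v i, z⟫ = -⟪v i, f⟫ := by
    rw [inner_sub_right, real_inner_smul_right, hvx, inner_reflectedForce hv]
    ring
  have hproj := norm_projection_sub_le hx hx'1 (hv.1 i) (hvx i) (a := A (v i)) (z := z) hτ
  rw [hvz, show v i + τ • (A (v i) - (-⟪v i, f⟫ + ⟪A (v i), x⟫) • x) =
      v i + τ • transportVelocity A f x v i by rw [transportVelocity, neg_add_eq_sub], ← sub_sub]
    at hproj
  have hAv : ‖A (v i)‖ ≤ B := (A.le_opNorm _).trans (by rw [hv.1, mul_one]; exact hA)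
  refine hproj.trans ?_
  have hcoef : τ * (2 * ‖A (v i)‖ + ‖z‖) ≤ τ * (4 * σ) := by gcongr; linarith
  nlinarith [mul_le_mul hcoef hdx (norm_nonneg _) (by positivity)]

theorem gsVariation_transportVelocity (hv : Orthonormal ℝ v) (hvx : ∀ i, ⟪v i, x⟫ = 0)
    (hA : (A : E →ₗ[ℝ] E).IsSymmetric) (i : Fin k) :
    gsVariation v (transportVelocity A f x v) i = A (v i) +
      ((-⟪v i, A (v i)⟫) • v i - (2:ℝ) • ∑ j ∈ Iio i, ⟪v j, A (v i)⟫ • v j) -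
      ⟪x, A (v i)⟫ • x + ⟪v i, f⟫ • x := by
  set h := transportVelocity A f x v
  have hxv : ∀ j, ⟪x, v j⟫ = 0 := fun j => by rw [real_inner_comm, hvx]
  have hcoef : ∀ j, ⟪h i, v j⟫ + ⟪h j, v i⟫ = 2 * ⟪v j, A (v i)⟫ := fun j => by
    simp only [h, transportVelocity, inner_sub_left, real_inner_smul_left, hxv, hA.apply_clm,
      real_inner_comm (A (v i))]
    ring
  have hsum : ∑ j ∈ Iio i, (⟪h i, v j⟫ + ⟪h j, v i⟫) • v j =
      (2:ℝ) • ∑ j ∈ Iio i, ⟪v j, A (v i)⟫ • v j := by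
    rw [smul_sum]
    exact sum_congr rfl fun j _ => by rw [hcoef, mul_smul]
  have hvw : ⟪v i, gsResidualVariation v h i⟫ = ⟪v i, A (v i)⟫ := by
    rw [inner_gsResidualVariation_of_le hv le_rfl]
    simp only [h, transportVelocity, inner_sub_right, real_inner_smul_right, hvx, mul_zero,
      sub_zero]
  rw [gsVariation, hvw, gsResidualVariation, hsum]
  simp only [h, transportVelocity]
  rw [real_inner_comm x]
  module

theorem IsGramSchmidt.orthonormal_and_inner_eq_zero {x' : E} {w : Fin k → E} (hx' : ‖x'‖ = 1)
    (hu : IsGramSchmidt (fun i => w i - ⟪w i, x'⟫ • x') u) :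
    Orthonormal ℝ u ∧ ∀ i, ⟪u i, x'⟫ = 0 :=
  ⟨hu.orthonormal, hu.inner_eq_zero fun i => by
    rw [inner_sub_left, real_inner_smul_left, real_inner_self_eq_norm_sq, hx']; ring⟩

theorem hisd_frame_step_error_le {x' : E} (hx : ‖x‖ = 1) (hv : Orthonormal ℝ v)
    (hvx : ∀ i, ⟪v i, x⟫ = 0) (hf : ‖f‖ ≤ B) (hA : ‖A‖ ≤ B) (hB : 1 ≤ B) (hτ : 0 ≤ τ)
    (hsmall : 32 * ((k + 1) * (20 * ((2 * k + 1) * B) ^ 2)) * 4 ^ k * τ ≤ 1)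
    (hx' : x' = ‖x + τ • reflectedForce v f‖⁻¹ • (x + τ • reflectedForce v f))
    (hu : IsGramSchmidt (fun i => (v i + τ • A (v i)) - ⟪v i + τ • A (v i), x'⟫ • x') u)
    (i : Fin k) :
    ‖u i - v i - τ • gsVariation v (transportVelocity A f x v) i‖ ≤
      64 * ((k + 1) * (20 * ((2 * k + 1) * B) ^ 2)) ^ 2 * 4 ^ k * τ ^ 2 := by
  set σ := (2 * (k : ℝ) + 1) * B
  have hσ : 1 ≤ σ := by simp only [σ]; nlinarith [(Nat.cast_nonneg k : (0:ℝ) ≤ k)]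
  have hK : 1 ≤ 20 * σ ^ 2 := by nlinarith
  have h4 : (1:ℝ) ≤ 4 ^ k := one_le_pow₀ (by norm_num)
  have hk1 : (1:ℝ) ≤ k + 1 := by linarith [(Nat.cast_nonneg k : (0:ℝ) ≤ k)]
  have hστ : 2 * σ * τ ≤ 1 := by
    have : 2 * σ ≤ 32 * ((k + 1) * (20 * σ ^ 2)) * 4 ^ k := by
      have : σ ≤ σ ^ 2 := by nlinarith
      nlinarith [mul_le_mul hk1 h4 zero_le_one (by positivity)]
    nlinarith
  refine (hu.norm_sub_sub_smul_gsVariation_le hv hK hτ hsmall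
    (fun j => (norm_transportVelocity_le hx hv hf hA j).trans (by nlinarith))
    (fun j => (norm_transport_sub_le hx hv hvx hf hA hτ hστ hx' j).trans_eq (by ring)) i).trans ?_
  gcongr
  exacts [by norm_num, i.isLt.le]

end Step

theorem norm_inv_smul_sub_le {a g : E} {C τ : ℝ} (hτ : 0 < τ) (h : ‖a - τ • g‖ ≤ C * τ ^ 2) :
    ‖τ⁻¹ • a - g‖ ≤ C * τ := by
  have : τ⁻¹ • a - g = τ⁻¹ • (a - τ • g) := by
    rw [smul_sub, smul_smul, inv_mul_cancel₀ hτ.ne', one_smul]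
  rw [this, norm_smul, norm_inv, Real.norm_of_nonneg hτ.le, inv_mul_le_iff₀ hτ]
  linarith

theorem exists_norm_le_of_norm_eq_one {F : E → E} {J : E → E →L[ℝ] E} {L : ℝ} (hL : 0 < L)
    (hLip : ∀ x₁ x₂, ‖J x₂ - J x₁‖ + ‖F x₂ - F x₁‖ ≤ L * ‖x₂ - x₁‖)
    (hgrow : ∀ x, ‖F x‖ ≤ L * (1 + ‖x‖)) {x₀ : E} (hx₀ : ‖x₀‖ = 1) :
    ∃ B ≥ 1, ∀ y, ‖y‖ = 1 → ‖J y‖ ≤ B ∧ ‖F y‖ ≤ B := by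
  refine ⟨‖J x₀‖ + 2 * L + 1, by linarith [norm_nonneg (J x₀)], fun y hy => ⟨?_, ?_⟩⟩
  · have hdist : ‖y - x₀‖ ≤ 2 := (norm_sub_le y x₀).trans (by rw [hy, hx₀]; norm_num)
    have := hLip x₀ y
    have := norm_le_norm_sub_add (J y) (J x₀)
    nlinarith [norm_nonneg (F y - F x₀)]
  · have := hgrow y
    rw [hy] at this
    linarith [norm_nonneg (J x₀)]

end

theorem hisd_stmt17_general
    (d k : ℕ)
    (F : EuclideanSpace ℝ (Fin d) → EuclideanSpace ℝ (Fin d))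
    (J : EuclideanSpace ℝ (Fin d) → (EuclideanSpace ℝ (Fin d) →L[ℝ] EuclideanSpace ℝ (Fin d)))
    (hJsymm : ∀ x u w, ⟪J x u, w⟫ = ⟪u, J x w⟫)
    (L : ℝ) (hL : 0 < L)
    (hLip : ∀ x₁ x₂ : EuclideanSpace ℝ (Fin d), ‖J x₂ - J x₁‖ + ‖F x₂ - F x₁‖ ≤ L * ‖x₂ - x₁‖)
    (hgrow : ∀ x : EuclideanSpace ℝ (Fin d), ‖F x‖ ≤ L * (1 + ‖x‖))
    (T : ℝ) (hT : 0 < T)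
    (x₀ : EuclideanSpace ℝ (Fin d)) (hx₀ : ‖x₀‖ = 1)
    (v₀ : Fin k → EuclideanSpace ℝ (Fin d))
    (hv₀ : ∀ i j : Fin k, ⟪v₀ i, v₀ j⟫ = if i = j then (1:ℝ) else 0)
    (hv₀x : ∀ i : Fin k, ⟪v₀ i, x₀⟫ = 0) :
    ∃ τ₀ > (0:ℝ), ∃ Q > (0:ℝ), ∀ (N : ℕ) (τ : ℝ), 0 < N → τ = T / N → τ ≤ τ₀ →
      ∀ (x : ℕ → EuclideanSpace ℝ (Fin d)) (v : ℕ → Fin k → EuclideanSpace ℝ (Fin d)),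
        x 0 = x₀ → v 0 = v₀ →
        (∀ n < N,
          let xt := x n + τ • (F (x n) - (2:ℝ) • ∑ j, ⟪v n j, F (x n)⟫ • v n j)
          xt ≠ 0 ∧ x (n+1) = ‖xt‖⁻¹ • xt) →
        (∀ n < N, ∀ i : Fin k,
          let vt := v n i + τ • J (x n) (v n i)
          let vh := vt - ⟪vt, x (n+1)⟫ • x (n+1)
          let w := vh - ∑ j ∈ Finset.Iio i, ⟪vh, v (n+1) j⟫ • v (n+1) j
          w ≠ 0 ∧ v (n+1) i = ‖w‖⁻¹ • w) →
        ∀ n < N, ∀ i : Fin k,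
          ‖τ⁻¹ • (v (n+1) i - v n i) - J (x n) (v n i) -
            ((-⟪v n i, J (x n) (v n i)⟫) • v n i -
              (2:ℝ) • ∑ j ∈ Finset.Iio i, ⟪v n j, J (x n) (v n i)⟫ • v n j) +
            ⟪x n, J (x n) (v n i)⟫ • x n -
            ⟪v n i, F (x n)⟫ • x n‖ ≤ Q * τ := by
  obtain ⟨B, hB, hbound⟩ := exists_norm_le_of_norm_eq_one hL hLip hgrow hx₀
  set c := ((k : ℝ) + 1) * (20 * ((2 * k + 1) * B) ^ 2)
  refine ⟨(32 * c * 4 ^ k)⁻¹, by positivity, 64 * c ^ 2 * 4 ^ k, by positivity, ?_⟩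
  intro N τ hN hτN hτ₀ x v hx0 hv0 hxstep hvstep n hn i
  have hτ : 0 < τ := hτN ▸ div_pos hT (Nat.cast_pos.mpr hN)
  have hsmall : 32 * c * 4 ^ k * τ ≤ 1 := (le_inv_mul_iff₀ (by positivity)).mp (by rwa [mul_one])
  obtain ⟨hxn, hvn, hvxn⟩ : ‖x n‖ = 1 ∧ Orthonormal ℝ (v n) ∧ ∀ j, ⟪v n j, x n⟫ = 0 := by
    cases n with
    | zero => exact hx0 ▸ hv0 ▸ ⟨hx₀, orthonormal_iff_ite.mpr hv₀, hv₀x⟩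
    | succ m =>
      obtain ⟨hxt, hx'⟩ := hxstep m (by omega)
      have hx1 : ‖x (m + 1)‖ = 1 := hx' ▸ norm_smul_inv_norm hxt
      exact ⟨hx1, IsGramSchmidt.orthonormal_and_inner_eq_zero hx1 (hvstep m (by omega))⟩
  have hstep := hisd_frame_step_error_le hxn hvn hvxn (hbound _ hxn).2 (hbound _ hxn).1 hB hτ.le
    hsmall (hxstep n hn).2 (hvstep n hn) i
  rw [gsVariation_transportVelocity hvn hvxn (hJsymm (x n))] at hstep
  refine (le_of_eq ?_).trans (norm_inv_smul_sub_le hτ hstep)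
  congr 1
  abel

theorem hisd_stmt17
    (d k : ℕ) (hd : 1 ≤ d) (hk : 1 ≤ k) (hkd : k ≤ d)
    (F : EuclideanSpace ℝ (Fin d) → EuclideanSpace ℝ (Fin d))
    (J : EuclideanSpace ℝ (Fin d) → (EuclideanSpace ℝ (Fin d) →L[ℝ] EuclideanSpace ℝ (Fin d)))
    (hJsymm : ∀ x u w, ⟪J x u, w⟫ = ⟪u, J x w⟫)
    (L : ℝ) (hL : 0 < L)
    (hLip : ∀ x₁ x₂ : EuclideanSpace ℝ (Fin d), ‖J x₂ - J x₁‖ + ‖F x₂ - F x₁‖ ≤ L * ‖x₂ - x₁‖)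
    (hgrow : ∀ x : EuclideanSpace ℝ (Fin d), ‖F x‖ ≤ L * (1 + ‖x‖))
    (T : ℝ) (hT : 0 < T)
    (x₀ : EuclideanSpace ℝ (Fin d)) (hx₀ : ‖x₀‖ = 1)
    (v₀ : Fin k → EuclideanSpace ℝ (Fin d))
    (hv₀ : ∀ i j : Fin k, ⟪v₀ i, v₀ j⟫ = if i = j then (1:ℝ) else 0)
    (hv₀x : ∀ i : Fin k, ⟪v₀ i, x₀⟫ = 0) :
    ∃ τ₀ > (0:ℝ), ∃ Q > (0:ℝ), ∀ (N : ℕ) (τ : ℝ), 0 < N → τ = T / N → τ ≤ τ₀ →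
      ∀ (x : ℕ → EuclideanSpace ℝ (Fin d)) (v : ℕ → Fin k → EuclideanSpace ℝ (Fin d)),
        x 0 = x₀ → v 0 = v₀ →
        (∀ n < N,
          let xt := x n + τ • (F (x n) - (2:ℝ) • ∑ j, ⟪v n j, F (x n)⟫ • v n j)
          xt ≠ 0 ∧ x (n+1) = ‖xt‖⁻¹ • xt) →
        (∀ n < N, ∀ i : Fin k,
          let vt := v n i + τ • J (x n) (v n i)
          let vh := vt - ⟪vt, x (n+1)⟫ • x (n+1)
          let w := vh - ∑ j ∈ Finset.Iio i, ⟪vh, v (n+1) j⟫ • v (n+1) j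
          w ≠ 0 ∧ v (n+1) i = ‖w‖⁻¹ • w) →
        ∀ n < N, ∀ i : Fin k,
          ‖τ⁻¹ • (v (n+1) i - v n i) - J (x n) (v n i) -
            ((-⟪v n i, J (x n) (v n i)⟫) • v n i -
              (2:ℝ) • ∑ j ∈ Finset.Iio i, ⟪v n j, J (x n) (v n i)⟫ • v n j) +
            ⟪x n, J (x n) (v n i)⟫ • x n -
            ⟪v n i, F (x n)⟫ • x n‖ ≤ Q * τ :=
  hisd_stmt17_general d k F J hJsymm L hL hLip hgrow T hT x₀ hx₀ v₀ hv₀ hv₀x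
end
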